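/- Let n ≥ 1, m ≥ 1, L > 0, λ ∈ [0,1), and let G_α be the 3×3 real matrix with rows [ (1+λ²)/2, 0, 2λ²α²L²/(1−λ²) ], [ 9/(4m), 1 − 1/(4m), 0 ], [ 30.5/(1−λ²), 97/8, (1+λ²)/2 ]. If 0 < α ≤ min{(1−λ²)²/(35λ), √n/√(8m)}·(1/L) (the λ-term interpreted as +∞ when λ = 0), then the spectral radius of G_α is strictly less than 1, and consequently Σ_{k=0}^∞ G_α^k = (I₃ − G_α)^{−1}. -/

import Mathlib

/-!
The matrix `G_α` is entrywise nonnegative, and for the positive vector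
`v = ((1-λ²)², 10(1-λ²)², 304)` the step-size bound gives `G_α v < v` entrywise. Hence
`G_α v ≤ θ v` for some `θ < 1`. Comparing an eigenvector `x` with `v` at the index maximising
`|xᵢ| / vᵢ` bounds every eigenvalue by `θ`, and `(G_α)ᵏ v ≤ θᵏ v` bounds the entries of `(G_α)ᵏ`
by a convergent geometric series, so the Neumann series converges to `(I - G_α)⁻¹`.
-/

open MeasureTheory ProbabilityTheory Finset Filter
open scoped ENNReal RealInnerProductSpace

noncomputable section

/-- The second largest singular value of a doubly stochastic matrix `w`, realized as the
operator norm of `w - (1/n) 𝟙ₙ 𝟙ₙᵀ` acting on `EuclideanSpace ℝ (Fin n)`. -/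
def secondSV {n : ℕ} (w : Matrix (Fin n) (Fin n) ℝ) : ℝ :=
  ‖LinearMap.toContinuousLinearMap
      (Matrix.toEuclideanLin (w - Matrix.of fun _ _ => (n : ℝ)⁻¹))‖

/-- The average `(1/n) ∑ᵢ vᵢ` of the blocks of a stacked vector `v ∈ ℝ^{np}`. -/
def blockAvg {n p : ℕ} (v : Fin n → EuclideanSpace ℝ (Fin p)) : EuclideanSpace ℝ (Fin p) :=
  (n : ℝ)⁻¹ • ∑ i, v i

/-- `‖v - J v‖²` for a stacked vector `v ∈ ℝ^{np}`, where `J = ((1/n) 𝟙ₙ 𝟙ₙᵀ) ⊗ Iₚ`. -/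
def consSq {n p : ℕ} (v : Fin n → EuclideanSpace ℝ (Fin p)) : ℝ :=
  ∑ i, ‖v i - blockAvg v‖ ^ 2

/-- `(W - J) v`, blockwise, where `W = w ⊗ Iₚ` and `J = ((1/n) 𝟙ₙ 𝟙ₙᵀ) ⊗ Iₚ`. -/
def WJapp {n p : ℕ} (w : Matrix (Fin n) (Fin n) ℝ) (v : Fin n → EuclideanSpace ℝ (Fin p)) :
    Fin n → EuclideanSpace ℝ (Fin p) :=
  fun i => (∑ r, w i r • v r) - blockAvg v

/-- The local batch function `fᵢ := (1/m) ∑ⱼ f_{i,j}`. -/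
def floc {n m p : ℕ} (f : Fin n → Fin m → EuclideanSpace ℝ (Fin p) → ℝ) (i : Fin n) :
    EuclideanSpace ℝ (Fin p) → ℝ :=
  fun u => (m : ℝ)⁻¹ * ∑ j, f i j u

/-- The global function `F := (1/n) ∑ᵢ fᵢ`. -/
def fglob {n m p : ℕ} (f : Fin n → Fin m → EuclideanSpace ℝ (Fin p) → ℝ) :
    EuclideanSpace ℝ (Fin p) → ℝ :=
  fun u => (n : ℝ)⁻¹ * ∑ i, floc f i u

/-- `F* := inf_x F(x)`. -/
def Fstar {n m p : ℕ} (f : Fin n → Fin m → EuclideanSpace ℝ (Fin p) → ℝ) : ℝ :=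
  ⨅ u, fglob f u

/-- `∇f̄(x) := (1/n) ∑ᵢ ∇fᵢ(xᵢ)`. -/
def gradfbar {n m p : ℕ} (f : Fin n → Fin m → EuclideanSpace ℝ (Fin p) → ℝ)
    (v : Fin n → EuclideanSpace ℝ (Fin p)) : EuclideanSpace ℝ (Fin p) :=
  (n : ℝ)⁻¹ • ∑ i, gradient (floc f i) (v i)

/-- The auxiliary quantity `t := (1/n) ∑ᵢ (1/m) ∑ⱼ ‖x̄ - z_{i,j}‖²`. -/
def tAux {n m p : ℕ} (xbar : EuclideanSpace ℝ (Fin p))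
    (z : Fin n → Fin m → EuclideanSpace ℝ (Fin p)) : ℝ :=
  (n : ℝ)⁻¹ * ∑ i, (m : ℝ)⁻¹ * ∑ j, ‖xbar - z i j‖ ^ 2

/-- The filtration `F^k := σ(τᵢᵗ, sᵢᵗ : i ∈ V, t ≤ k-1)`, with `F⁰` trivial. -/
def gtFilt {Ω : Type*} {n m : ℕ} (τ s : Fin n → ℕ → Ω → Fin m) (k : ℕ) :
    MeasurableSpace Ω :=
  ⨆ (i : Fin n) (t : ℕ) (_ : t < k),
    MeasurableSpace.comap (τ i t) ⊤ ⊔ MeasurableSpace.comap (s i t) ⊤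

open Matrix

lemma le_smul_of_forall_div_le {ι : Type*} {u v : ι → ℝ} {θ : ℝ} (hv : ∀ i, 0 < v i)
    (h : ∀ i, u i / v i ≤ θ) : u ≤ θ • v := fun i => by
  simpa [mul_comm] using (div_le_iff₀ (hv i)).1 (h i)

namespace Matrix

variable {ι : Type*} [Fintype ι] {G : Matrix ι ι ℝ} {v : ι → ℝ} {θ : ℝ}

lemma mulVec_mono_of_nonneg (hG : ∀ i j, 0 ≤ G i j) {u w : ι → ℝ} (huw : u ≤ w) :
    G *ᵥ u ≤ G *ᵥ w :=
  fun i => dotProduct_le_dotProduct_of_nonneg_left huw (hG i)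

lemma exists_mulVec_le_smul_of_mulVec_lt (hG : ∀ i j, 0 ≤ G i j) (hv : ∀ i, 0 < v i)
    (hGv : ∀ i, (G *ᵥ v) i < v i) : ∃ θ : ℝ, 0 ≤ θ ∧ θ < 1 ∧ G *ᵥ v ≤ θ • v := by
  rcases isEmpty_or_nonempty ι with hι | hι
  · exact ⟨0, le_rfl, one_pos, isEmptyElim⟩
  obtain ⟨i₀, hi₀⟩ := Finite.exists_max fun i => (G *ᵥ v) i / v i
  have hGv_nonneg : 0 ≤ (G *ᵥ v) i₀ := dotProduct_nonneg_of_nonneg (hG i₀) fun j => (hv j).le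
  exact ⟨(G *ᵥ v) i₀ / v i₀, div_nonneg hGv_nonneg (hv i₀).le, (div_lt_one (hv i₀)).2 (hGv i₀),
    le_smul_of_forall_div_le hv hi₀⟩

lemma norm_map_mulVec_apply_le (hG : ∀ i j, 0 ≤ G i j) (x : ι → ℂ) (i : ι) :
    ‖(G.map (algebraMap ℝ ℂ) *ᵥ x) i‖ ≤ (G *ᵥ fun j => ‖x j‖) i := by
  refine (norm_sum_le _ _).trans_eq (Finset.sum_congr rfl fun j _ => ?_)
  simp [Complex.norm_real, abs_of_nonneg (hG i j)]

variable [DecidableEq ι]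

lemma norm_le_of_mem_spectrum_map (hG : ∀ i j, 0 ≤ G i j) (hv : ∀ i, 0 < v i)
    (hGv : G *ᵥ v ≤ θ • v) {c : ℂ} (hc : c ∈ spectrum ℂ (G.map (algebraMap ℝ ℂ))) :
    ‖c‖ ≤ θ := by
  rw [← spectrum_toLin', ← Module.End.hasEigenvalue_iff_mem_spectrum] at hc
  obtain ⟨x, hx⟩ := hc.exists_hasEigenvector
  have hcx : G.map (algebraMap ℝ ℂ) *ᵥ x = c • x := by simpa using hx.apply_eq_smul
  obtain ⟨j₀, hj₀⟩ := Function.ne_iff.1 hx.2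
  have : Nonempty ι := ⟨j₀⟩
  obtain ⟨i₀, hi₀⟩ := Finite.exists_max fun i => ‖x i‖ / v i
  set t := ‖x i₀‖ / v i₀
  have hxt : (fun i => ‖x i‖) ≤ t • v := le_smul_of_forall_div_le hv hi₀
  have hx_pos : 0 < ‖x i₀‖ := (div_pos_iff_of_pos_right (hv i₀)).1
    ((div_pos (norm_pos_iff.2 hj₀) (hv j₀)).trans_le (hi₀ j₀))
  have ht : t * v i₀ = ‖x i₀‖ := div_mul_cancel₀ _ (hv i₀).ne'
  refine le_of_mul_le_mul_right ?_ hx_pos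
  calc ‖c‖ * ‖x i₀‖ = ‖(G.map (algebraMap ℝ ℂ) *ᵥ x) i₀‖ := by
        rw [hcx, Pi.smul_apply, smul_eq_mul, norm_mul]
    _ ≤ (G *ᵥ fun j => ‖x j‖) i₀ := norm_map_mulVec_apply_le hG x i₀
    _ ≤ (G *ᵥ (t • v)) i₀ := mulVec_mono_of_nonneg hG hxt i₀
    _ = t * (G *ᵥ v) i₀ := by simp [mulVec_smul]
    _ ≤ t * (θ * v i₀) := mul_le_mul_of_nonneg_left (hGv i₀) (div_nonneg (norm_nonneg _) (hv i₀).le)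
    _ = θ * ‖x i₀‖ := by rw [← ht]; ring

lemma pow_mulVec_le_smul (hG : ∀ i j, 0 ≤ G i j) (hθ : 0 ≤ θ) (hGv : G *ᵥ v ≤ θ • v)
    (k : ℕ) : G ^ k *ᵥ v ≤ θ ^ k • v := by
  induction k with
  | zero => simp
  | succ k ih =>
    calc G ^ (k + 1) *ᵥ v = G *ᵥ (G ^ k *ᵥ v) := by rw [pow_succ', mulVec_mulVec]
      _ ≤ G *ᵥ (θ ^ k • v) := mulVec_mono_of_nonneg hG ih
      _ = θ ^ k • (G *ᵥ v) := mulVec_smul _ _ _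
      _ ≤ θ ^ k • θ • v := smul_le_smul_of_nonneg_left hGv (pow_nonneg hθ k)
      _ = θ ^ (k + 1) • v := by rw [smul_smul, pow_succ]

lemma pow_apply_le (hG : ∀ i j, 0 ≤ G i j) (hv : ∀ i, 0 < v i) (hθ : 0 ≤ θ)
    (hGv : G *ᵥ v ≤ θ • v) (k : ℕ) (i j : ι) : (G ^ k) i j ≤ θ ^ k * v i / v j := by
  rw [le_div_iff₀ (hv j)]
  calc (G ^ k) i j * v j ≤ (G ^ k *ᵥ v) i :=
        Finset.single_le_sum (f := fun j => (G ^ k) i j * v j)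
          (fun r _ => mul_nonneg (pow_apply_nonneg hG k i r) (hv r).le) (Finset.mem_univ j)
    _ ≤ θ ^ k * v i := pow_mulVec_le_smul hG hθ hGv k i

lemma summable_pow_of_mulVec_le_smul (hG : ∀ i j, 0 ≤ G i j) (hv : ∀ i, 0 < v i)
    (hθ₀ : 0 ≤ θ) (hθ₁ : θ < 1) (hGv : G *ᵥ v ≤ θ • v) : Summable (G ^ ·) := by
  refine Pi.summable.2 fun i => Pi.summable.2 fun j => ?_
  refine Summable.of_nonneg_of_le (fun k => pow_apply_nonneg hG k i j)
    (pow_apply_le hG hv hθ₀ hGv · i j) ?_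
  simpa only [mul_div_assoc] using (summable_geometric_of_lt_one hθ₀ hθ₁).mul_right (v i / v j)

lemma tsum_pow_eq_inv_one_sub (h : Summable (G ^ ·)) : ∑' k, G ^ k = (1 - G)⁻¹ :=
  (inv_eq_right_inv h.one_sub_mul_tsum_pow).symm

end Matrix

/-- `G_α` with its step-size-dependent entry `2λ²α²L²/(1-λ²)` abstracted to `b`. -/
def gtsagaMatrix (m : ℕ) (lam b : ℝ) : Matrix (Fin 3) (Fin 3) ℝ :=
  !![(1 + lam ^ 2) / 2, 0, b;
     9 / (4 * m), 1 - 1 / (4 * m), 0;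
     30.5 / (1 - lam ^ 2), 97 / 8, (1 + lam ^ 2) / 2]

def gtsagaTestVector (lam : ℝ) : Fin 3 → ℝ :=
  ![(1 - lam ^ 2) ^ 2, 10 * (1 - lam ^ 2) ^ 2, 304]

section GTSAGA

variable {m : ℕ} {lam b : ℝ}

lemma gtsagaTestVector_pos (hlam : lam ^ 2 < 1) (i : Fin 3) : 0 < gtsagaTestVector lam i := by
  have hs : 0 < 1 - lam ^ 2 := by linarith
  fin_cases i <;> simp [gtsagaTestVector] <;> positivity

lemma gtsagaMatrix_nonneg (hm : 0 < m) (hlam : lam ^ 2 < 1) (hb : 0 ≤ b) (i j : Fin 3) :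
    0 ≤ gtsagaMatrix m lam b i j := by
  have hs : 0 < 1 - lam ^ 2 := by linarith
  have hm_inv : (m : ℝ)⁻¹ ≤ 1 := inv_le_one_of_one_le₀ (by exact_mod_cast hm)
  fin_cases i <;> fin_cases j <;> simp [gtsagaMatrix] <;> first | positivity | linarith

/-- With `s = 1 - λ²`, the three rows reduce to `304 b < s³/2`, `9 < 10` and `121.25 s < 121.5`. -/
lemma gtsagaMatrix_mulVec_lt (hm : 0 < m) (hlam : lam ^ 2 < 1)
    (hb : b ≤ 2 * (1 - lam ^ 2) ^ 3 / 1225) (i : Fin 3) :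
    (gtsagaMatrix m lam b *ᵥ gtsagaTestVector lam) i < gtsagaTestVector lam i := by
  obtain ⟨s, hs_def⟩ : ∃ s, s = 1 - lam ^ 2 := ⟨_, rfl⟩
  have hlam_sq : lam ^ 2 = 1 - s := by linarith
  have hs : 0 < s := by linarith
  have hs1 : s ≤ 1 := by nlinarith
  have hm_inv : (0 : ℝ) < (m : ℝ)⁻¹ := by positivity
  fin_cases i <;> simp [gtsagaMatrix, gtsagaTestVector, mulVec, dotProduct,
    Fin.sum_univ_three, hlam_sq] at hb ⊢
  · nlinarith [pow_pos hs 3]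
  · rw [div_mul_eq_div_div, div_eq_mul_inv _ (m : ℝ)]
    nlinarith [mul_pos hm_inv (pow_pos hs 2)]
  · rw [div_mul_eq_mul_div, pow_two, ← mul_assoc, mul_div_cancel_right₀ _ hs.ne']
    nlinarith

lemma lam_mul_α_mul_L_le {L α : ℝ} (hL : 0 < L) (hlam0 : 0 ≤ lam)
    (hα : lam ≠ 0 → α ≤ (1 - lam ^ 2) ^ 2 / (35 * lam) * (1 / L)) :
    lam * (α * L) ≤ (1 - lam ^ 2) ^ 2 / 35 := by
  rcases hlam0.eq_or_lt with rfl | hlam_pos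
  · simp
  calc lam * (α * L) ≤ lam * ((1 - lam ^ 2) ^ 2 / (35 * lam) * (1 / L) * L) := by
        gcongr; exact hα hlam_pos.ne'
    _ = (1 - lam ^ 2) ^ 2 / 35 := by field_simp

lemma gtsaga_entry_le {L α : ℝ} (hL : 0 < L) (hlam0 : 0 ≤ lam) (hlam : lam ^ 2 < 1) (hα0 : 0 < α)
    (hα : lam ≠ 0 → α ≤ (1 - lam ^ 2) ^ 2 / (35 * lam) * (1 / L)) :
    2 * lam ^ 2 * α ^ 2 * L ^ 2 / (1 - lam ^ 2) ≤ 2 * (1 - lam ^ 2) ^ 3 / 1225 := by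
  have hs : 0 < 1 - lam ^ 2 := by linarith
  have hsq := pow_le_pow_left₀ (by positivity) (lam_mul_α_mul_L_le hL hlam0 hα) 2
  rw [div_le_div_iff₀ hs (by norm_num)]
  nlinarith

end GTSAGA

theorem gtsaga_G_spectral_radius_lt_one_general
    (m : ℕ) (hm : 1 ≤ m) (L lam α : ℝ) (hL : 0 < L)
    (hlam0 : 0 ≤ lam) (hlam1 : lam < 1) (hα0 : 0 < α)
    (hα1 : lam ≠ 0 → α ≤ (1 - lam ^ 2) ^ 2 / (35 * lam) * (1 / L)) :
    let G : Matrix (Fin 3) (Fin 3) ℝ :=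
      !![(1 + lam ^ 2) / 2, 0, 2 * lam ^ 2 * α ^ 2 * L ^ 2 / (1 - lam ^ 2);
         9 / (4 * m), 1 - 1 / (4 * m), 0;
         30.5 / (1 - lam ^ 2), 97 / 8, (1 + lam ^ 2) / 2]
    (∀ c ∈ spectrum ℂ (G.map (algebraMap ℝ ℂ)), ‖c‖ < 1) ∧
      (∑' k : ℕ, G ^ k) = (1 - G)⁻¹ := by
  intro G
  have hlam : lam ^ 2 < 1 := by nlinarith
  have hb_nonneg : 0 ≤ 2 * lam ^ 2 * α ^ 2 * L ^ 2 / (1 - lam ^ 2) :=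
    div_nonneg (by positivity) (by linarith)
  have hG : ∀ i j, 0 ≤ G i j := gtsagaMatrix_nonneg hm hlam hb_nonneg
  have hv := gtsagaTestVector_pos hlam
  have hGv_lt : ∀ i, (G *ᵥ gtsagaTestVector lam) i < gtsagaTestVector lam i :=
    gtsagaMatrix_mulVec_lt hm hlam (gtsaga_entry_le hL hlam0 hlam hα0 hα1)
  obtain ⟨θ, hθ₀, hθ₁, hGv⟩ := exists_mulVec_le_smul_of_mulVec_lt hG hv hGv_lt
  exact ⟨fun c hc => (norm_le_of_mem_spectrum_map hG hv hGv hc).trans_lt hθ₁,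
    tsum_pow_eq_inv_one_sub (summable_pow_of_mulVec_le_smul hG hv hθ₀ hθ₁ hGv)⟩

/-- Spectral radius of the GT-SAGA LTI matrix `G_α` is less than one for small step-sizes,
hence its Neumann series converges to `(I - G_α)⁻¹`. -/
theorem gtsaga_G_spectral_radius_lt_one
    (n m : ℕ) (hn : 1 ≤ n) (hm : 1 ≤ m) (L lam α : ℝ) (hL : 0 < L)
    (hlam0 : 0 ≤ lam) (hlam1 : lam < 1) (hα0 : 0 < α)
    (hα1 : lam ≠ 0 → α ≤ (1 - lam ^ 2) ^ 2 / (35 * lam) * (1 / L))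
    (hα2 : α ≤ Real.sqrt n / Real.sqrt (8 * m) * (1 / L)) :
    let G : Matrix (Fin 3) (Fin 3) ℝ :=
      !![(1 + lam ^ 2) / 2, 0, 2 * lam ^ 2 * α ^ 2 * L ^ 2 / (1 - lam ^ 2);
         9 / (4 * m), 1 - 1 / (4 * m), 0;
         30.5 / (1 - lam ^ 2), 97 / 8, (1 + lam ^ 2) / 2]
    (∀ c ∈ spectrum ℂ (G.map (algebraMap ℝ ℂ)), ‖c‖ < 1) ∧
      (∑' k : ℕ, G ^ k) = (1 - G)⁻¹ :=
  gtsaga_G_spectral_radius_lt_one_general m hm L lam α hL hlam0 hlam1 hα0 hα1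

end
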